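/- If A is a retractable automaton and λ_{i,j} is the restriction to R(a_i) of a retract homomorphism of A onto R(a_j) with R(a_j) ⊆ R(a_i), then λ_{i,j} maps the R-class R_{a_i} into the R-class R_{a_j}, and hence induces a partial homomorphism of the trap-removed principal factor R^0{a_i} into R^0{a_j}. -/

import Mathlib

/-!
A retract homomorphism `φ` onto `R(a_j)` fixes `a_j` and commutes with `δ(·, p)`. For `b ∈ R_{a_i}`
we have `a_j ∈ R(b)`, say `a_j = δ(b, p)`, hence `a_j = φ(a_j) = δ(φ b, p) ∈ R(φ b)`; together with
`φ b ∈ R(a_j)` this gives `R(φ b) = R(a_j)`. The partial-homomorphism property is then just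
`φ (δ b x) = δ (φ b) x`.
-/

universe u v

/-- The transition function extended to words (`X*`). -/
def deltaStar {A X : Type*} (δ : A → X → A) : A → List X → A
  | a, [] => a
  | a, x :: p => deltaStar δ (δ a x) p

/-- `B` is a subautomaton of the automaton with transition `δ`. -/
def IsSubaut {A X : Type*} (δ : A → X → A) (B : Set A) : Prop :=
  B.Nonempty ∧ ∀ b ∈ B, ∀ x : X, δ b x ∈ B

/-- `φ` is a retract homomorphism of the automaton onto the subautomaton `B`:
a homomorphism of `A` onto `B` leaving the elements of `B` fixed. -/
def IsRetractHom {A X : Type*} (δ : A → X → A) (B : Set A) (φ : A → A) : Prop :=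
  (∀ a, φ a ∈ B) ∧ (∀ b ∈ B, φ b = b) ∧ ∀ a x, φ (δ a x) = δ (φ a) x

/-- `B` is a retract subautomaton. -/
def IsRetract {A X : Type*} (δ : A → X → A) (B : Set A) : Prop :=
  ∃ φ, IsRetractHom δ B φ

/-- An automaton is retractable if every subautomaton is retract. -/
def Retractable {A X : Type*} (δ : A → X → A) : Prop :=
  ∀ B, IsSubaut δ B → IsRetract δ B

/-- Retractability of the subautomaton on the carrier `D` (homomorphisms are
represented by functions on the ambient state set, restricted to `D`). -/
def RetractableOn {A X : Type*} (δ : A → X → A) (D : Set A) : Prop :=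
  ∀ C ⊆ D, IsSubaut δ C →
    ∃ φ : A → A, (∀ a ∈ D, φ a ∈ C) ∧ (∀ c ∈ C, φ c = c) ∧
      ∀ a ∈ D, ∀ x, φ (δ a x) = δ (φ a) x

/-- The principal subautomaton `R(a) = δ(a, X*)` generated by `a`. -/
def Rset {A X : Type*} (δ : A → X → A) (a : A) : Set A :=
  {b | ∃ p : List X, deltaStar δ a p = b}

/-- The `R`-class `R_a = {b : R(b) = R(a)}`. -/
def Rclass {A X : Type*} (δ : A → X → A) (a : A) : Set A :=
  {b | Rset δ b = Rset δ a}

/-- `R[a] = R(a) − R_a`. -/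
def Rideal {A X : Type*} (δ : A → X → A) (a : A) : Set A :=
  Rset δ a \ Rclass δ a

/-- The Rees congruence induced by `B`: two states are related iff they are
equal or both lie in `B`. -/
def reesRel {A : Type*} (B : Set A) (u v : A) : Prop :=
  u = v ∨ (u ∈ B ∧ v ∈ B)

/-- A minimal subautomaton: a subautomaton with no proper subautomaton. -/
def IsMinimalSubaut {A X : Type*} (δ : A → X → A) (B : Set A) : Prop :=
  IsSubaut δ B ∧ ∀ C ⊆ B, IsSubaut δ C → C = B

/-- The automaton has a kernel: a subautomaton contained in every subautomaton. -/
def HasKernel {A X : Type*} (δ : A → X → A) : Prop :=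
  ∃ K, IsSubaut δ K ∧ ∀ B, IsSubaut δ B → K ⊆ B

/-- The principal factor `R{a}` (the Rees factor of `R(a)` modulo `R[a]`,
described via the Rees congruence) is strongly connected. -/
def FactorSC {A X : Type*} (δ : A → X → A) (a : A) : Prop :=
  ∀ b ∈ Rset δ a, ∀ c ∈ Rset δ a,
    ∃ p : List X, p ≠ [] ∧ reesRel (Rideal δ a) (deltaStar δ b p) c

/-- The principal factor `R{a}` is a strongly trap-connected non-trivial
one-trap automaton (with trap the class of `t`). -/
def FactorSTC {A X : Type*} (δ : A → X → A) (a : A) : Prop :=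
  ∃ t ∈ Rset δ a,
    (∀ x, reesRel (Rideal δ a) (δ t x) t) ∧
    (∃ b ∈ Rset δ a, ¬ reesRel (Rideal δ a) b t) ∧
    (∀ b ∈ Rset δ a, (∀ x, reesRel (Rideal δ a) (δ b x) b) → reesRel (Rideal δ a) b t) ∧
    (∀ b ∈ Rset δ a, ∀ c ∈ Rset δ a, ¬ reesRel (Rideal δ a) b t →
      ∃ p : List X, p ≠ [] ∧ reesRel (Rideal δ a) (deltaStar δ b p) c)

/-- The principal factor `R{a}` is a strongly trapped non-trivial one-trap
automaton (with trap the class of `t`). -/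
def FactorST {A X : Type*} (δ : A → X → A) (a : A) : Prop :=
  ∃ t ∈ Rset δ a,
    (∃ b ∈ Rset δ a, ¬ reesRel (Rideal δ a) b t) ∧
    (∀ b ∈ Rset δ a, (∀ x, reesRel (Rideal δ a) (δ b x) b) → reesRel (Rideal δ a) b t) ∧
    (∀ b ∈ Rset δ a, ∀ x, reesRel (Rideal δ a) (δ b x) t)

/-- Semiconnected: every principal factor is strongly connected or strongly
trap-connected. -/
def Semiconnected {A X : Type*} (δ : A → X → A) : Prop :=
  ∀ a, FactorSC δ a ∨ FactorSTC δ a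

/-- The subautomaton on `D` is semiconnected, via the characterization: for
every subautomaton `C ⊆ D` and every `a ∈ C` there are `b ∈ C` and a nonempty
word `p` with `a = δ(b,p)`. -/
def SemiconnectedOn {A X : Type*} (δ : A → X → A) (D : Set A) : Prop :=
  ∀ C ⊆ D, IsSubaut δ C → ∀ a ∈ C, ∃ b ∈ C, ∃ p : List X, p ≠ [] ∧ deltaStar δ b p = a

/-- The automaton is a dilation of its subautomaton `B`. -/
def IsDilationOf {A X : Type*} (δ : A → X → A) (B : Set A) : Prop :=
  IsSubaut δ B ∧ ∃ φ : A → A, (∀ a, φ a ∈ B) ∧ (∀ b ∈ B, φ b = b) ∧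
    ∀ a x, δ a x = δ (φ a) x

/-- Extension of a partial transition function (`none` = the removed trap)
to words. -/
def pStar {C X : Type*} (d : C → X → Option C) : C → List X → Option C
  | a, [] => some a
  | a, x :: p => (d a x).bind fun b => pStar d b p

/-- The data of the Construction: a finite tree `(T, le)` with least element
`i0`; `C i` is the trap-removed part `A⁰ᵢ` of the automaton `Aᵢ`, with partial
transition `d i` (`none` means the trap); `A_{i0}` is strongly connected and
the other `Aᵢ` are non-trivial strongly trap-connected one-trap automata;
`Φ i j` are the composite partial homomorphisms along covering chains
(given here as coherent data whose covering components satisfy conditions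
(ii) and (iii)); `δ'` is the glued transition function on `A = ⋃ A⁰ᵢ`. -/
def ConstructionSpec {X : Type*} (T : Type*) (le : T → T → Prop) (i0 : T)
    (C : T → Type*) (d : ∀ i, C i → X → Option (C i))
    (Φ : ∀ i j, le j i → C i → C j)
    (δ' : (Σ i, C i) → X → Σ i, C i) : Prop :=
  (∀ i, le i i) ∧ (∀ i j, le i j → le j i → i = j) ∧
  (∀ i j k, le i j → le j k → le i k) ∧
  Finite T ∧
  (∀ S : Set T, S.Nonempty → (∃ u, ∀ i ∈ S, le i u) → ∃ g ∈ S, ∀ i ∈ S, le i g) ∧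
  (∀ i, le i0 i) ∧
  Nonempty (C i0) ∧
  (∀ (a : C i0) (x : X), (d i0 a x).isSome) ∧
  (∀ a b : C i0, ∃ p : List X, p ≠ [] ∧ pStar (d i0) a p = some b) ∧
  (∀ i, i ≠ i0 → Nonempty (C i) ∧
    (∀ a b : C i, ∃ p : List X, p ≠ [] ∧ pStar (d i) a p = some b) ∧
    (∀ a : C i, ∃ p : List X, p ≠ [] ∧ pStar (d i) a p = none)) ∧
  (∀ i (h : le i i) (a : C i), Φ i i h a = a) ∧
  (∀ i j k (h1 : le j i) (h2 : le k j) (h3 : le k i) (a : C i),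
    Φ j k h2 (Φ i j h1 a) = Φ i k h3 a) ∧
  (∀ i j (h : le j i), i ≠ j → (∀ k, le j k → le k i → k = j ∨ k = i) →
    (∀ (a : C i) (x : X) (b : C i),
      d i a x = some b → d j (Φ i j h a) x = some (Φ i j h b)) ∧
    ∃ (a : C i) (x : X), d i a x = none ∧ (d j (Φ i j h a) x).isSome) ∧
  (∀ i (a : C i) (x : X), ∃ (j : T) (hj : le j i) (b : C j),
    δ' ⟨i, a⟩ x = ⟨j, b⟩ ∧ d j (Φ i j hj a) x = some b ∧
    ∀ k (hk : le k i), (d k (Φ i k hk a) x).isSome → le k j)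

lemma deltaStar_append {A X : Type*} (δ : A → X → A) (a : A) (p q : List X) :
    deltaStar δ a (p ++ q) = deltaStar δ (deltaStar δ a p) q := by
  induction p generalizing a with
  | nil => rfl
  | cons x p ih => simp only [List.cons_append, deltaStar, ih]

lemma map_deltaStar {A X : Type*} {δ : A → X → A} {φ : A → A}
    (hφ : ∀ a x, φ (δ a x) = δ (φ a) x) (a : A) (p : List X) :
    φ (deltaStar δ a p) = deltaStar δ (φ a) p := by
  induction p generalizing a with
  | nil => rfl
  | cons x p ih => simp only [deltaStar, hφ, ih]

lemma mem_Rset_self {A X : Type*} (δ : A → X → A) (a : A) : a ∈ Rset δ a :=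
  ⟨[], rfl⟩

lemma Rset_subset_of_mem {A X : Type*} {δ : A → X → A} {a b : A} (h : b ∈ Rset δ a) :
    Rset δ b ⊆ Rset δ a := by
  obtain ⟨p, rfl⟩ := h
  rintro c ⟨q, rfl⟩
  exact ⟨p ++ q, deltaStar_append δ a p q⟩

lemma IsRetractHom.mem_Rclass {A X : Type*} {δ : A → X → A} {a b : A} {φ : A → A}
    (hφ : IsRetractHom δ (Rset δ a) φ) (hab : a ∈ Rset δ b) : φ b ∈ Rclass δ a := by
  obtain ⟨hmaps, hfix, hhom⟩ := hφ
  obtain ⟨p, hp⟩ := hab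
  have h_a_mem : a ∈ Rset δ (φ b) :=
    ⟨p, by rw [← map_deltaStar hhom, hp, hfix a (mem_Rset_self δ a)]⟩
  exact (Rset_subset_of_mem (hmaps b)).antisymm (Rset_subset_of_mem h_a_mem)

theorem stmt_19_general {A X : Type*} (δ : A → X → A)
    (ai aj : A) (hsub : Rset δ aj ⊆ Rset δ ai)
    (φ : A → A) (hφ : IsRetractHom δ (Rset δ aj) φ) :
    (∀ b ∈ Rclass δ ai, φ b ∈ Rclass δ aj) ∧
    (∀ b ∈ Rclass δ ai, ∀ x : X, δ b x ∈ Rclass δ ai →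
      δ (φ b) x ∈ Rclass δ aj ∧ δ (φ b) x = φ (δ b x)) := by
  have maps_Rclass : ∀ b ∈ Rclass δ ai, φ b ∈ Rclass δ aj := fun b hb =>
    hφ.mem_Rclass (by rw [show Rset δ b = Rset δ ai from hb]; exact hsub (mem_Rset_self δ aj))
  refine ⟨maps_Rclass, fun b _ x hx => ?_⟩
  rw [← hφ.2.2 b x]
  exact ⟨maps_Rclass _ hx, rfl⟩

/-- the restriction of a retract homomorphism onto `R(a_j)`
(with `R(a_j) ⊆ R(a_i)`) maps `R_{a_i}` into `R_{a_j}` and induces a partial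
homomorphism of the trap-removed principal factors. -/
theorem stmt_19 {A X : Type*} (δ : A → X → A) (h : Retractable δ)
    (ai aj : A) (hsub : Rset δ aj ⊆ Rset δ ai)
    (φ : A → A) (hφ : IsRetractHom δ (Rset δ aj) φ) :
    (∀ b ∈ Rclass δ ai, φ b ∈ Rclass δ aj) ∧
    (∀ b ∈ Rclass δ ai, ∀ x : X, δ b x ∈ Rclass δ ai →
      δ (φ b) x ∈ Rclass δ aj ∧ δ (φ b) x = φ (δ b x)) :=
  stmt_19_general δ ai aj hsub φ hφ
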